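/- Let (C_k)_{k≥0} be a sequence of Laurent polynomials with integer coefficients such that there exist positive constants A, B, D with ℓ¹-norm ‖C_k‖₁ ≤ e^{A k + B log k} and support of C_k contained in [−D k², D k²] for all k ≥ 1. For k ≥ 0 and α, ε ∈ ℂ define g_k(α, ε) = (∏_{j=1}^{k} ((e^{α/2} − e^{−α/2})² − (e^{jε/2} − e^{−jε/2})²)) · C_k(e^{ε}). Then there exists an open neighborhood U of 0 in ℂ such that for every integer N ≥ 1 there exists a constant M_N > 0 with the following property: for all integers n ≥ 1 and all α ∈ U with α ≠ 0, |n/α|^N · |∑_{k=0}^{n} (g_k(α, α/n) − ∑_{j=0}^{N−1} (1/j!) · (∂^j g_k/∂ε^j)(α, 0) · (α/n)^j)| ≤ M_N. -/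

import Mathlib

/-- The evaluation of an integer Laurent polynomial (a finitely supported function `ℤ → ℤ`)
at a complex number `q`: `∑_j a_j q^j`. -/
noncomputable def laurentEval (c : ℤ →₀ ℤ) (q : ℂ) : ℂ :=
  ∑ j ∈ c.support, (c j : ℂ) * q ^ j

/-- The ℓ¹-norm of an integer Laurent polynomial: `∑_j |a_j|`. -/
noncomputable def laurentL1 (c : ℤ →₀ ℤ) : ℝ :=
  ∑ j ∈ c.support, |(c j : ℝ)|

/-- `g_k(α, ε) = (∏_{j=1}^{k} ((e^{α/2} − e^{−α/2})² − (e^{jε/2} − e^{−jε/2})²)) · C_k(e^ε)`. -/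
noncomputable def gAux (C : ℕ → (ℤ →₀ ℤ)) (k : ℕ) (α ε : ℂ) : ℂ :=
  (∏ j ∈ Finset.Icc 1 k,
    ((Complex.exp (α / 2) - Complex.exp (-α / 2)) ^ 2
      - (Complex.exp ((j : ℂ) * ε / 2) - Complex.exp (-((j : ℂ) * ε / 2))) ^ 2)) *
    laurentEval (C k) (Complex.exp ε)

/-! Each `ε ↦ g_k(α, ε)` is entire. For `|α| ≤ c/2` and `|ε| ≤ c/(k+1)` every factor of the
product is at most `5c²` and `|C_k(e^ε)| ≤ e^{Ak + B log k + Dck}`, so for `c` small enough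
`|g_k(α, ε)| ≤ E·2^{-k}` uniformly in `k`. By the Cauchy estimates on the circle of radius
`c/(k+1)`, which contains `α/n` in its half-disc once `|α| < c/4` and `k ≤ n`, the remainder of
order `N` at `α/n` is at most `2E·2^{-k}·((k+1)|α/n|/c)^N`; the factor `|α/n|^N` cancels and
`∑_k 2^{-k}(k+1)^N` converges. -/

open Complex Metric Finset Filter Topology
open scoped Nat

noncomputable def taylorSum (f : ℂ → ℂ) (N : ℕ) (z : ℂ) : ℂ :=
  ∑ j ∈ range N, (1 / (j ! : ℂ)) * iteratedDeriv j f 0 * z ^ j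

theorem norm_sub_taylorSum_le {f : ℂ → ℂ} {r M : ℝ} (hr : 0 < r)
    (hf : DiffContOnCl ℂ f (ball 0 r)) (hM : ∀ w ∈ sphere (0 : ℂ) r, ‖f w‖ ≤ M)
    {z : ℂ} (hz : ‖z‖ < r) (N : ℕ) :
    ‖f z - taylorSum f N z‖ ≤ M * (‖z‖ / r) ^ N / (1 - ‖z‖ / r) := by
  have hsum : HasSum (fun j ↦ (1 / (j ! : ℂ)) * iteratedDeriv j f 0 * z ^ j) (f z) := by
    simpa [mul_comm, mul_left_comm] using
      hasSum_taylorSeries_on_ball hf.differentiableOn (mem_ball_zero_iff.2 hz)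
  rw [norm_sub_rev]
  refine norm_sub_le_of_geometric_bound_of_hasSum ((div_lt_one hr).2 hz) (fun j ↦ ?_) hsum N
  have hfac : (0 : ℝ) < j ! := mod_cast j.factorial_pos
  calc ‖(1 / (j ! : ℂ)) * iteratedDeriv j f 0 * z ^ j‖
      = ‖iteratedDeriv j f 0‖ / j ! * ‖z‖ ^ j := by simp [div_eq_inv_mul]
    _ ≤ j ! * M / r ^ j / j ! * ‖z‖ ^ j := by
      gcongr; exact norm_iteratedDeriv_le_of_forall_mem_sphere_norm_le j hr hf hM
    _ = M * (‖z‖ / r) ^ j := by rw [div_pow]; field_simp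

theorem inv_pow_mul_norm_sub_taylorSum_le {f : ℂ → ℂ} {r M : ℝ} (hr : 0 < r)
    (hf : DiffContOnCl ℂ f (ball 0 r)) (hM : ∀ w ∈ sphere (0 : ℂ) r, ‖f w‖ ≤ M)
    {z : ℂ} (hz0 : z ≠ 0) (hz : ‖z‖ ≤ r / 2) (N : ℕ) :
    ‖z‖⁻¹ ^ N * ‖f z - taylorSum f N z‖ ≤ 2 * M / r ^ N := by
  have hq : ‖z‖ / r ≤ 1 / 2 := by rw [div_le_iff₀ hr]; linarith
  have hM0 : 0 ≤ M := (norm_nonneg _).trans (hM r (by simp [hr.le]))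
  have hz' : 0 < ‖z‖ := norm_pos_iff.2 hz0
  calc ‖z‖⁻¹ ^ N * ‖f z - taylorSum f N z‖
      ≤ ‖z‖⁻¹ ^ N * (M * (‖z‖ / r) ^ N / (1 - ‖z‖ / r)) := by
        gcongr; exact norm_sub_taylorSum_le hr hf hM (by linarith) N
    _ = M / r ^ N / (1 - ‖z‖ / r) := by rw [div_pow, inv_pow]; field_simp
    _ ≤ M / r ^ N / (1 / 2) := by gcongr; linarith
    _ = 2 * M / r ^ N := by ring

theorem norm_exp_half_sub_exp_neg_half_le {x : ℂ} (hx : ‖x‖ ≤ 2) :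
    ‖exp (x / 2) - exp (-(x / 2))‖ ≤ 2 * ‖x‖ := by
  have hx' : ‖x / 2‖ ≤ 1 := by rw [norm_div, RCLike.norm_ofNat]; linarith
  calc ‖exp (x / 2) - exp (-(x / 2))‖ = ‖(exp (x / 2) - 1) - (exp (-(x / 2)) - 1)‖ := by ring_nf
    _ ≤ ‖exp (x / 2) - 1‖ + ‖exp (-(x / 2)) - 1‖ := norm_sub_le _ _
    _ ≤ 2 * ‖x / 2‖ + 2 * ‖-(x / 2)‖ :=
        add_le_add (norm_exp_sub_one_le hx') (norm_exp_sub_one_le (by rwa [norm_neg]))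
    _ = 2 * ‖x‖ := by rw [norm_neg, norm_div, RCLike.norm_ofNat]; ring

theorem laurentEval_exp (p : ℤ →₀ ℤ) (ε : ℂ) :
    laurentEval p (exp ε) = ∑ j ∈ p.support, (p j : ℂ) * exp (j * ε) := by
  simp only [laurentEval, ← exp_int_mul]

theorem differentiable_laurentEval_exp (p : ℤ →₀ ℤ) :
    Differentiable ℂ fun ε ↦ laurentEval p (exp ε) := by
  simp only [laurentEval_exp]; fun_prop

theorem norm_laurentEval_exp_le (p : ℤ →₀ ℤ) {R : ℝ} (hR : ∀ j ∈ p.support, |(j : ℝ)| ≤ R)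
    (ε : ℂ) : ‖laurentEval p (exp ε)‖ ≤ laurentL1 p * Real.exp (R * ‖ε‖) := by
  rw [laurentEval_exp, laurentL1, sum_mul]
  refine (norm_sum_le _ _).trans (sum_le_sum fun j hj ↦ ?_)
  rw [norm_mul, norm_intCast]
  gcongr
  calc ‖exp (j * ε)‖ ≤ Real.exp ‖(j : ℂ) * ε‖ := norm_exp_le_exp_norm _
    _ ≤ Real.exp (R * ‖ε‖) := by
      rw [norm_mul, norm_intCast]; gcongr; exact hR j hj

theorem differentiable_gAux (C : ℕ → (ℤ →₀ ℤ)) (k : ℕ) (α : ℂ) :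
    Differentiable ℂ (gAux C k α) := by
  unfold gAux
  have := differentiable_laurentEval_exp (C k)
  fun_prop

theorem norm_gAux_le (C : ℕ → (ℤ →₀ ℤ)) (k : ℕ) {α ε : ℂ} {c : ℝ} (hc : c ≤ 2)
    (hα : ‖α‖ ≤ c / 2) (hε : k * ‖ε‖ ≤ c) :
    ‖gAux C k α ε‖ ≤ (5 * c ^ 2) ^ k * ‖laurentEval (C k) (exp ε)‖ := by
  rw [gAux, norm_mul, norm_prod]
  gcongr
  calc ∏ j ∈ Icc 1 k, ‖(exp (α / 2) - exp (-α / 2)) ^ 2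
        - (exp ((j : ℂ) * ε / 2) - exp (-((j : ℂ) * ε / 2))) ^ 2‖
      ≤ ∏ _j ∈ Icc 1 k, 5 * c ^ 2 := by
        gcongr with j hj
        have hjε : ‖(j : ℂ) * ε‖ ≤ c := by
          rw [norm_mul, norm_natCast]
          exact le_trans (by gcongr; exact_mod_cast (mem_Icc.1 hj).2) hε
        have hα' := norm_exp_half_sub_exp_neg_half_le (x := α) (by linarith)
        have hε' := norm_exp_half_sub_exp_neg_half_le (x := (j : ℂ) * ε) (by linarith)
        rw [neg_div]
        calc _ ≤ ‖exp (α / 2) - exp (-(α / 2))‖ ^ 2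
              + ‖exp ((j : ℂ) * ε / 2) - exp (-((j : ℂ) * ε / 2))‖ ^ 2 := by
              rw [← norm_pow, ← norm_pow]; exact norm_sub_le _ _
          _ ≤ (2 * ‖α‖) ^ 2 + (2 * ‖(j : ℂ) * ε‖) ^ 2 := by gcongr
          _ ≤ (2 * (c / 2)) ^ 2 + (2 * c) ^ 2 := by gcongr
          _ = 5 * c ^ 2 := by ring
    _ = (5 * c ^ 2) ^ k := by rw [prod_const, Nat.card_Icc, add_tsub_cancel_right]

theorem norm_gAux_le_pow (C : ℕ → (ℤ →₀ ℤ)) (k : ℕ) {A B D c : ℝ} (hB : 0 ≤ B) (hD : 0 ≤ D)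
    (hc : c ≤ 2) (hnorm : laurentL1 (C k) ≤ Real.exp (A * k + B * Real.log k))
    (hsupp : ∀ j ∈ (C k).support, |(j : ℝ)| ≤ D * (k : ℝ) ^ 2)
    {α ε : ℂ} (hα : ‖α‖ ≤ c / 2) (hε : k * ‖ε‖ ≤ c) :
    ‖gAux C k α ε‖ ≤ (5 * c ^ 2 * Real.exp (A + B + D * c)) ^ k := by
  have hexp : A * k + B * Real.log k + D * k ^ 2 * ‖ε‖ ≤ (A + B + D * c) * k := by
    have hlog : B * Real.log k ≤ B * k := by gcongr; exact Real.log_le_self k.cast_nonneg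
    have hsq : D * k ^ 2 * ‖ε‖ ≤ D * c * k := by
      rw [sq, ← mul_assoc, mul_assoc _ (k : ℝ)]
      nlinarith [mul_le_mul_of_nonneg_left hε (mul_nonneg hD k.cast_nonneg)]
    linarith
  calc ‖gAux C k α ε‖ ≤ (5 * c ^ 2) ^ k * ‖laurentEval (C k) (exp ε)‖ :=
        norm_gAux_le C k hc hα hε
    _ ≤ (5 * c ^ 2) ^ k * (Real.exp (A * k + B * Real.log k) * Real.exp (D * k ^ 2 * ‖ε‖)) := by
        gcongr
        exact (norm_laurentEval_exp_le _ hsupp ε).trans (by gcongr)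
    _ ≤ (5 * c ^ 2) ^ k * Real.exp ((A + B + D * c) * k) := by
        rw [← Real.exp_add]; gcongr
    _ = (5 * c ^ 2 * Real.exp (A + B + D * c)) ^ k := by
        rw [mul_comm _ (k : ℝ), Real.exp_nat_mul, mul_pow (5 * c ^ 2)]

theorem exists_norm_gAux_le_geometric (C : ℕ → (ℤ →₀ ℤ)) {A B D : ℝ} (hB : 0 ≤ B) (hD : 0 ≤ D)
    (hnorm : ∀ k : ℕ, 1 ≤ k → laurentL1 (C k) ≤ Real.exp (A * k + B * Real.log k))
    (hsupp : ∀ k : ℕ, 1 ≤ k → ∀ j ∈ (C k).support, |(j : ℝ)| ≤ D * (k : ℝ) ^ 2) :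
    ∃ c > 0, ∃ E ≥ 0, ∀ (k : ℕ) (α ε : ℂ), ‖α‖ ≤ c / 2 → ‖ε‖ ≤ c / (k + 1) →
      ‖gAux C k α ε‖ ≤ E * (1 / 2) ^ k := by
  obtain ⟨c, hρ, hc0, hc2⟩ : ∃ c : ℝ,
      5 * c ^ 2 * Real.exp (A + B + D * c) ≤ 1 / 2 ∧ 0 < c ∧ c ≤ 2 := by
    have hlim : Tendsto (fun c : ℝ ↦ 5 * c ^ 2 * Real.exp (A + B + D * c)) (𝓝[>] 0) (𝓝 0) := by
      have hcont : Continuous fun c : ℝ ↦ 5 * c ^ 2 * Real.exp (A + B + D * c) := by fun_prop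
      simpa using (hcont.tendsto 0).mono_left nhdsWithin_le_nhds
    exact ((hlim.eventually (ge_mem_nhds (by norm_num))).and
      (Ioc_mem_nhdsGT two_pos)).exists
  obtain ⟨E₀, hE₀⟩ := (isCompact_closedBall (0 : ℂ) c).exists_bound_of_continuousOn
    (differentiable_laurentEval_exp (C 0)).continuous.continuousOn
  refine ⟨c, hc0, max E₀ 1, by positivity, fun k α ε hα hε ↦ ?_⟩
  rcases Nat.eq_zero_or_pos k with rfl | hk
  · simpa [gAux] using (hE₀ ε (by simpa using hε)).trans (le_max_left _ _)
  · have hkε : k * ‖ε‖ ≤ c := by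
      rw [le_div_iff₀ (by positivity)] at hε
      nlinarith [norm_nonneg ε]
    calc ‖gAux C k α ε‖ ≤ (5 * c ^ 2 * Real.exp (A + B + D * c)) ^ k :=
          norm_gAux_le_pow C k hB hD hc2 (hnorm k hk) (hsupp k hk) hα hkε
      _ ≤ (1 / 2) ^ k := by gcongr
      _ ≤ max E₀ 1 * (1 / 2) ^ k := le_mul_of_one_le_left (by positivity) (le_max_right _ _)

theorem summable_half_pow_div_pow (c : ℝ) (N : ℕ) :
    Summable fun k : ℕ ↦ (1 / 2 : ℝ) ^ k / (c / (k + 1)) ^ N := by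
  have h := (summable_nat_add_iff 1).2
    (summable_pow_mul_geometric_of_norm_lt_one N (r := (1 / 2 : ℝ)) (by norm_num))
  refine (h.mul_left (2 / c ^ N)).congr fun k ↦ ?_
  rw [div_pow c, div_div_eq_mul_div]
  push_cast
  ring

theorem norm_div_natCast_le {c : ℝ} (hc : 0 ≤ c) {α : ℂ} (hα : ‖α‖ ≤ c / 4) {k n : ℕ}
    (hkn : k ≤ n) : ‖α / n‖ ≤ c / (k + 1) / 2 := by
  rcases n.eq_zero_or_pos with rfl | hn
  · simp only [Nat.cast_zero, div_zero, norm_zero]; positivity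
  have hkn' : (k : ℝ) + 1 ≤ 2 * n := by exact_mod_cast (by omega : k + 1 ≤ 2 * n)
  rw [norm_div, Complex.norm_natCast, div_le_iff₀ (by positivity), div_div,
    div_mul_eq_mul_div, le_div_iff₀ (by positivity)]
  nlinarith

theorem taylor_remainder_uniform_bound_general (C : ℕ → (ℤ →₀ ℤ)) (A B D : ℝ)
    (hB : 0 < B) (hD : 0 < D)
    (hnorm : ∀ k : ℕ, 1 ≤ k → laurentL1 (C k) ≤ Real.exp (A * k + B * Real.log k))
    (hsupp : ∀ k : ℕ, 1 ≤ k → ∀ j ∈ (C k).support, |(j : ℝ)| ≤ D * (k : ℝ) ^ 2) :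
    ∃ U : Set ℂ, IsOpen U ∧ 0 ∈ U ∧
      ∀ N : ℕ, 1 ≤ N → ∃ M : ℝ, 0 < M ∧
        ∀ n : ℕ, 1 ≤ n → ∀ α ∈ U, α ≠ 0 →
          ‖(n : ℂ) / α‖ ^ N *
            ‖∑ k ∈ Finset.range (n + 1),
              (gAux C k α (α / n) -
                ∑ j ∈ Finset.range N,
                  (1 / (j.factorial : ℂ)) * iteratedDeriv j (gAux C k α) 0 * (α / n) ^ j)‖ ≤
            M := by
  obtain ⟨c, hc, E, hE, hg⟩ := exists_norm_gAux_le_geometric C hB.le hD.le hnorm hsupp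
  refine ⟨ball 0 (c / 4), isOpen_ball, mem_ball_self (by positivity), fun N _ ↦ ?_⟩
  set u : ℕ → ℝ := fun k ↦ 2 * E * ((1 / 2) ^ k / (c / (k + 1)) ^ N)
  have hu : Summable u := (summable_half_pow_div_pow c N).mul_left (2 * E)
  refine ⟨∑' k, u k + 1, by positivity, fun n hn α hα hα0 ↦ ?_⟩
  have hαc : ‖α‖ < c / 4 := mem_ball_zero_iff.1 hα
  have hremainder : ∀ k ∈ range (n + 1),
      ‖(n : ℂ) / α‖ ^ N * ‖gAux C k α (α / n) - taylorSum (gAux C k α) N (α / n)‖ ≤ u k := by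
    intro k hk
    rw [← inv_div, norm_inv]
    refine (inv_pow_mul_norm_sub_taylorSum_le (by positivity)
      (differentiable_gAux C k α).diffContOnCl
      (fun w hw ↦ hg k α w (by linarith) (mem_sphere_zero_iff_norm.1 hw).le)
      (div_ne_zero hα0 (Nat.cast_ne_zero.2 (by omega)))
      (norm_div_natCast_le hc.le hαc.le (Nat.lt_succ_iff.1 (mem_range.1 hk))) N).trans_eq ?_
    simp only [u]; ring
  calc ‖(n : ℂ) / α‖ ^ N *
        ‖∑ k ∈ range (n + 1), (gAux C k α (α / n) - taylorSum (gAux C k α) N (α / n))‖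
      ≤ ∑ k ∈ range (n + 1),
          ‖(n : ℂ) / α‖ ^ N * ‖gAux C k α (α / n) - taylorSum (gAux C k α) N (α / n)‖ := by
        rw [← mul_sum]; gcongr; exact norm_sum_le _ _
    _ ≤ ∑ k ∈ range (n + 1), u k := sum_le_sum hremainder
    _ ≤ ∑' k, u k := hu.sum_le_tsum _ fun k _ ↦ by positivity
    _ ≤ ∑' k, u k + 1 := by linarith

/-- Under the growth hypotheses on `(C_k)`, there is an open neighborhood `U`
of `0` such that for every `N ≥ 1` there is `M_N > 0` with: for all `n ≥ 1` and `α ∈ U`,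
`α ≠ 0`,
`|n/α|^N · |∑_{k=0}^{n} (g_k(α, α/n) − ∑_{j=0}^{N−1} (1/j!) ∂^j_ε g_k(α,0) (α/n)^j)| ≤ M_N`. -/
theorem taylor_remainder_uniform_bound (C : ℕ → (ℤ →₀ ℤ)) (A B D : ℝ)
    (hA : 0 < A) (hB : 0 < B) (hD : 0 < D)
    (hnorm : ∀ k : ℕ, 1 ≤ k → laurentL1 (C k) ≤ Real.exp (A * k + B * Real.log k))
    (hsupp : ∀ k : ℕ, 1 ≤ k → ∀ j ∈ (C k).support, |(j : ℝ)| ≤ D * (k : ℝ) ^ 2) :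
    ∃ U : Set ℂ, IsOpen U ∧ 0 ∈ U ∧
      ∀ N : ℕ, 1 ≤ N → ∃ M : ℝ, 0 < M ∧
        ∀ n : ℕ, 1 ≤ n → ∀ α ∈ U, α ≠ 0 →
          ‖(n : ℂ) / α‖ ^ N *
            ‖∑ k ∈ Finset.range (n + 1),
              (gAux C k α (α / n) -
                ∑ j ∈ Finset.range N,
                  (1 / (j.factorial : ℂ)) * iteratedDeriv j (gAux C k α) 0 * (α / n) ^ j)‖ ≤
            M :=
  taylor_remainder_uniform_bound_general C A B D hB hD hnorm hsupp
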